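/- In the Gaudin realization, the B-operators decompose in terms of untwisted ones: B_M(μ) = ∑_{k=0}^{M−1} ξ^k ∑_{j₁<⋯<j_{M−k}} B_{M−k}(μ_{j₁},…,μ_{j_{M−k}})₀ · p̂_k^(M−k) + ξ^M p̂_M, where B_L(·)₀ is the operator B_L evaluated at ξ = 0 (i.e., built from X⁻(λ)₀ = ∑_a X⁻_a/(λ − z_a)), and p̂_i^(j) = (−h_gl/2 + j)(−h_gl/2 + j + 1)⋯(−h_gl/2 + i + j − 1), p̂_M = p̂_M^(0). -/

import Mathlib

open Finset
open scoped Classical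

/-- The operators B^(k)_M(μ₁,…,μ_M) = ∏_{n=k}^{M+k−1} (X⁻(μ_{n−k+1}) + nξ). -/
noncomputable def Bop {A : Type*} [Ring A] [Module ℂ A]
    (Xm : ℂ → A) (ξ : ℂ) : ℕ → List ℂ → A
  | _, [] => 1
  | k, μ :: t => (Xm μ + ((k : ℂ) * ξ) • (1 : A)) * Bop Xm ξ (k + 1) t

/-- the twisted Gaudin generator X⁻(λ) = ∑_a (X⁻_a/(λ−z_a) − (ξ/2)h_a) -/
noncomputable def XmGaudin {H : Type*} [AddCommGroup H] [Module ℂ H] {N : ℕ}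
    (z : Fin N → ℂ) (ξ : ℂ) (XmA hA : Fin N → Module.End ℂ H) (lam : ℂ) :
    Module.End ℂ H :=
  ∑ a, ((lam - z a)⁻¹ • XmA a - (ξ / 2) • hA a)

/-- the untwisted generator X⁻(λ)₀ = ∑_a X⁻_a/(λ−z_a) -/
noncomputable def Xm0Gaudin {H : Type*} [AddCommGroup H] [Module ℂ H] {N : ℕ}
    (z : Fin N → ℂ) (XmA : Fin N → Module.End ℂ H) (lam : ℂ) : Module.End ℂ H :=
  ∑ a, (lam - z a)⁻¹ • XmA a

/-- p̂_i^(j) = (−h_gl/2 + j)(−h_gl/2 + j + 1)⋯(−h_gl/2 + i + j − 1) -/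
noncomputable def phat {H : Type*} [AddCommGroup H] [Module ℂ H]
    (hgl : Module.End ℂ H) (i j : ℕ) : Module.End ℂ H :=
  ((List.range i).map (fun n =>
    (-(1 / 2) : ℂ) • hgl + (((j : ℂ) + (n : ℂ)) • (1 : Module.End ℂ H)))).prod

/-!
Write X⁻(λ) = X⁻(λ)₀ + ξ·(−h_gl/2). Since X⁻(λ)₀ lowers the h_gl-weight by 2, a factor
−h_gl/2 + c moves to the right through a product of r untwisted generators at the cost of
shifting c to c + r. Expanding B^(k)(l) factor by factor, each factor contributes either
X⁻(μ)₀ or ξ(−h_gl/2 + c); pushing the latter to the right assembles them into p̂, giving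
B^(k)(l) = ∑_{S sublist of l} ξ^{|l|−|S|} B(S)₀ p̂_{|l|−|S|}^{(k+|S|)}.
Grouping the sublists of (μ₁,…,μ_M) by length and listing them as strictly increasing index maps
gives the stated decomposition.
-/

section Combinatorics

variable {α β : Type*} [AddCommMonoid β]

theorem sum_sublists'_eq_sum_range_sublistsLen (g : List α → β) (l : List α) :
    (l.sublists'.map g).sum = ∑ r ∈ range (l.length + 1), ((l.sublistsLen r).map g).sum := by
  rw [← ((List.range_bind_sublistsLen_perm l).map g).sum_eq, List.flatMap, List.map_flatten,
    List.sum_flatten, List.map_map, List.map_map]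
  rfl

theorem sublist_finRange_iff {M : ℕ} {l : List (Fin M)} :
    l.Sublist (List.finRange M) ↔ l.SortedLT := by
  refine ⟨fun h => ((List.sortedLT_finRange M).pairwise.sublist h).sortedLT, fun h => ?_⟩
  exact List.sublist_of_subperm_of_sortedLE
    (List.subperm_of_subset h.nodup fun x _ => List.mem_finRange x) h.sortedLE
    (List.sortedLT_finRange M).sortedLE

theorem coe_sublistsLen_finRange (M r : ℕ) :
    ((List.finRange M).sublistsLen r : Multiset (List (Fin M))) =
      (univ : Finset {f : Fin r → Fin M // StrictMono f}).val.map fun f => List.ofFn f.1 := by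
  refine (Multiset.Nodup.ext
    (Multiset.coe_nodup.2 (List.nodup_sublistsLen r (List.nodup_finRange M)))
    (univ.nodup.map fun f g h => Subtype.ext (List.ofFn_injective h))).2 fun l => ?_
  simp only [Multiset.mem_coe, List.mem_sublistsLen, sublist_finRange_iff, Multiset.mem_map,
    mem_val, mem_univ, true_and]
  constructor
  · rintro ⟨hl, rfl⟩
    exact ⟨⟨l.get, hl.strictMono_get⟩, List.ofFn_get l⟩
  · rintro ⟨f, rfl⟩
    exact ⟨List.sortedLT_ofFn_iff.2 f.2, List.length_ofFn⟩

theorem sum_sublistsLen_finRange {M : ℕ} (g : List (Fin M) → β) (r : ℕ) :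
    (((List.finRange M).sublistsLen r).map g).sum =
      ∑ f : {f : Fin r → Fin M // StrictMono f}, g (List.ofFn f.1) := by
  simpa [Multiset.map_map] using congrArg (fun s => (s.map g).sum) (coe_sublistsLen_finRange M r)

theorem sum_sublists'_ofFn {M : ℕ} (μ : Fin M → α) (g : List α → β) :
    ((List.ofFn μ).sublists'.map g).sum =
      ∑ r ∈ range (M + 1), ∑ f : {f : Fin r → Fin M // StrictMono f}, g (List.ofFn (μ ∘ f.1)) := by
  rw [List.ofFn_eq_map, List.sublists'_map, List.map_map, sum_sublists'_eq_sum_range_sublistsLen,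
    List.length_finRange]
  simp only [sum_sublistsLen_finRange, Function.comp_apply, List.map_ofFn]

end Combinatorics

theorem Bop_zero_eq_prod {A : Type*} [Ring A] [Module ℂ A] (Xm : ℂ → A) (k : ℕ) (l : List ℂ) :
    Bop Xm 0 k l = (l.map Xm).prod := by
  induction l generalizing k with
  | nil => rfl
  | cons a t ih => simp [Bop, ih]

section Algebra

variable {A : Type*} [Ring A] [Algebra ℂ A]

noncomputable def phatFactor (h : A) (c : ℂ) : A := (-(1 / 2) : ℂ) • h + c • 1

theorem phatFactor_mul_of_commutator {h x : A} (hx : h * x - x * h = (-2 : ℂ) • x) (c : ℂ) :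
    phatFactor h c * x = x * phatFactor h (c + 1) := by
  rw [sub_eq_iff_eq_add] at hx
  simp only [phatFactor, add_mul, mul_add, smul_mul_assoc, mul_smul_comm, hx, one_mul, mul_one]
  module

theorem phatFactor_mul_prod {h : A} {l : List A} (hl : ∀ x ∈ l, h * x - x * h = (-2 : ℂ) • x)
    (c : ℂ) : phatFactor h c * l.prod = l.prod * phatFactor h (c + l.length) := by
  induction l generalizing c with
  | nil => simp
  | cons x t ih =>
    rw [List.prod_cons, ← mul_assoc, phatFactor_mul_of_commutator (hl x (by simp)), mul_assoc,
      ih (fun y hy => hl y (by simp [hy])), ← mul_assoc, List.length_cons]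
    push_cast
    ring_nf

end Algebra

section Phat

variable {H : Type*} [AddCommGroup H] [Module ℂ H]

-- In `phat`, `List.range i` is coerced to a `List ℂ` by a monadic bind, since `n` is used as a
-- complex number; this lemma removes the coercion.
theorem phat_eq_prod (h : Module.End ℂ H) (i j : ℕ) :
    phat h i j = ((List.range i).map fun n : ℕ => phatFactor h (j + n)).prod := by
  simp only [phat, phatFactor, List.pure_def, List.bind_eq_flatMap, ← List.map_eq_flatMap,
    List.map_map]
  rfl

theorem phat_zero (h : Module.End ℂ H) (j : ℕ) : phat h 0 j = 1 := by
  simp [phat_eq_prod]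

theorem phat_succ (h : Module.End ℂ H) (i j : ℕ) :
    phat h (i + 1) j = phatFactor h j * phat h i (j + 1) := by
  rw [phat_eq_prod, phat_eq_prod, List.prod_range_succ']
  push_cast
  simp only [add_zero, add_assoc, add_comm (1 : ℂ)]

end Phat

section Expansion

variable {H : Type*} [AddCommGroup H] [Module ℂ H] {h : Module.End ℂ H} {X0 : ℂ → Module.End ℂ H}

theorem prod_mul_phat_succ (hX0 : ∀ lam, h * X0 lam - X0 lam * h = (-2 : ℂ) • X0 lam)
    (S : List ℂ) (n k : ℕ) :
    (S.map X0).prod * phat h (n + 1) (k + S.length) =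
      phatFactor h k * ((S.map X0).prod * phat h n (k + 1 + S.length)) := by
  have hcomm := phatFactor_mul_prod (l := S.map X0) (by simpa using fun lam _ => hX0 lam) (k : ℂ)
  rw [List.length_map] at hcomm
  rw [phat_succ, ← mul_assoc, ← mul_assoc, hcomm, add_right_comm]
  push_cast
  rfl

theorem Bop_sub_smul_eq_sum_sublists' (hX0 : ∀ lam, h * X0 lam - X0 lam * h = (-2 : ℂ) • X0 lam)
    (ξ : ℂ) (l : List ℂ) (k : ℕ) :
    Bop (fun lam => X0 lam - (ξ / 2) • h) ξ k l =
      (l.sublists'.map fun S => ξ ^ (l.length - S.length) •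
        ((S.map X0).prod * phat h (l.length - S.length) (k + S.length))).sum := by
  induction l generalizing k with
  | nil => simp [Bop, phat_zero]
  | cons a t ih =>
    have hfactor : X0 a - (ξ / 2) • h + ((k : ℂ) * ξ) • (1 : Module.End ℂ H) =
        X0 a + ξ • phatFactor h k := by
      simp only [phatFactor]
      module
    have hwithout : (t.sublists'.map fun S => ξ ^ (t.length + 1 - S.length) •
          ((S.map X0).prod * phat h (t.length + 1 - S.length) (k + S.length))).sum =
        ξ • phatFactor h k * Bop (fun lam => X0 lam - (ξ / 2) • h) ξ (k + 1) t := by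
      rw [ih, ← List.sum_map_mul_left]
      refine congrArg List.sum (List.map_congr_left fun S hS => ?_)
      rw [Nat.sub_add_comm (List.mem_sublists'.1 hS).length_le, pow_succ',
        prod_mul_phat_succ hX0, smul_mul_assoc, mul_smul_comm, smul_smul]
    have hwith : (t.sublists'.map fun S => ξ ^ (t.length + 1 - (S.length + 1)) •
          (X0 a * (S.map X0).prod *
            phat h (t.length + 1 - (S.length + 1)) (k + (S.length + 1)))).sum =
        X0 a * Bop (fun lam => X0 lam - (ξ / 2) • h) ξ (k + 1) t := by
      rw [ih, ← List.sum_map_mul_left]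
      refine congrArg List.sum (List.map_congr_left fun S _ => ?_)
      rw [Nat.add_sub_add_right, add_comm (S.length) 1, ← add_assoc, mul_smul_comm, mul_assoc]
    rw [Bop, hfactor, add_mul, add_comm, ← hwithout, ← hwith, List.sublists'_cons, List.map_append,
      List.sum_append, List.map_map]
    simp only [List.length_cons, Function.comp_def, List.map_cons, List.prod_cons]

end Expansion

section Gaudin

variable {H : Type*} [AddCommGroup H] [Module ℂ H] {N : ℕ} (z : Fin N → ℂ)
  (XmA hA : Fin N → Module.End ℂ H)

theorem XmGaudin_eq (ξ lam : ℂ) :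
    XmGaudin z ξ XmA hA lam = Xm0Gaudin z XmA lam - (ξ / 2) • ∑ a, hA a := by
  rw [XmGaudin, Xm0Gaudin, smul_sum, sum_sub_distrib]

theorem commutator_sum_Xm0Gaudin
    (hhXm : ∀ a b, hA a * XmA b - XmA b * hA a = if a = b then (-2 : ℂ) • XmA a else 0)
    (lam : ℂ) :
    (∑ a, hA a) * Xm0Gaudin z XmA lam - Xm0Gaudin z XmA lam * ∑ a, hA a =
      (-2 : ℂ) • Xm0Gaudin z XmA lam := by
  have hsum (b : Fin N) : (∑ a, hA a) * XmA b - XmA b * ∑ a, hA a = (-2 : ℂ) • XmA b := by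
    simp [sum_mul, mul_sum, ← sum_sub_distrib, hhXm]
  rw [Xm0Gaudin, mul_sum, sum_mul, ← sum_sub_distrib, smul_sum]
  refine sum_congr rfl fun b _ => ?_
  rw [mul_smul_comm, smul_mul_assoc, ← smul_sub, hsum, smul_comm]

end Gaudin

theorem Bop_untwisted_decomposition_general
    {H : Type*} [AddCommGroup H] [Module ℂ H]
    (N : ℕ) (z : Fin N → ℂ) (ξ : ℂ)
    (hA XmA : Fin N → Module.End ℂ H)
    (hhXm : ∀ a b, hA a * XmA b - XmA b * hA a = if a = b then (-2 : ℂ) • XmA a else 0)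
    (M : ℕ) (μ : Fin M → ℂ) :
    Bop (XmGaudin z ξ XmA hA) ξ 0 (List.ofFn μ) =
      (∑ k ∈ Finset.range M, ξ ^ k •
          ∑ f : {f : Fin (M - k) → Fin M // StrictMono f},
            Bop (Xm0Gaudin z XmA) (0 : ℂ) 0 (List.ofFn (μ ∘ f.1)) *
              phat (∑ a, hA a) k (M - k))
        + ξ ^ M • phat (∑ a, hA a) M 0 := by
  rw [funext (XmGaudin_eq z XmA hA ξ),
    Bop_sub_smul_eq_sum_sublists' (commutator_sum_Xm0Gaudin z XmA hA hhXm), sum_sublists'_ofFn,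
    List.length_ofFn, ← sum_range_reflect, sum_range_succ, Nat.add_sub_cancel, Nat.sub_self]
  congr 1
  · refine sum_congr rfl fun k hk => ?_
    simp only [List.length_ofFn, Nat.sub_sub_self (mem_range.1 hk).le, zero_add, smul_sum,
      Bop_zero_eq_prod]
  · have hcard : Fintype.card {f : Fin 0 → Fin M // StrictMono f} = 1 :=
      Fintype.card_eq_one_iff.2 ⟨⟨Fin.elim0, fun a => a.elim0⟩, fun _ => Subsingleton.elim _ _⟩
    simp [hcard]

/-- decomposition of the twisted B-operators into untwisted ones:
    B_M(μ) = ∑_{k=0}^{M−1} ξ^k ∑_{j₁<⋯<j_{M−k}} B_{M−k}(μ_{j₁},…)₀ p̂_k^{(M−k)}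
             + ξ^M p̂_M. -/
theorem Bop_untwisted_decomposition
    {H : Type*} [AddCommGroup H] [Module ℂ H]
    (N : ℕ) (z : Fin N → ℂ) (hz : Function.Injective z) (ξ : ℂ)
    (hA XmA : Fin N → Module.End ℂ H)
    (hhh : ∀ a b, hA a * hA b = hA b * hA a)
    (hhXm : ∀ a b, hA a * XmA b - XmA b * hA a = if a = b then (-2 : ℂ) • XmA a else 0)
    (hXmXm : ∀ a b, XmA a * XmA b = XmA b * XmA a)
    (M : ℕ) (μ : Fin M → ℂ) (hμ : Function.Injective μ)
    (hdisj : ∀ i a, μ i ≠ z a) :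
    Bop (XmGaudin z ξ XmA hA) ξ 0 (List.ofFn μ) =
      (∑ k ∈ Finset.range M, ξ ^ k •
          ∑ f : {f : Fin (M - k) → Fin M // StrictMono f},
            Bop (Xm0Gaudin z XmA) (0 : ℂ) 0 (List.ofFn (μ ∘ f.1)) *
              phat (∑ a, hA a) k (M - k))
        + ξ ^ M • phat (∑ a, hA a) M 0 :=
  Bop_untwisted_decomposition_general N z ξ hA XmA hhXm M μ
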